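/- Let Γ ≥ 0 and Δ ≥ 2 be even integers, and let m ≥ 1, n' ≥ 0, n'' ≥ 0 be integers satisfying 2m + n' + n'' = (2^{Γ+2Δ} − 1)/3, 3n' + n'' = 2^{Γ+Δ} − 1, and n'' ≤ 2^Δ − 1. Then there exists an additive 1-perfect code in ℤ4^{2m} × ℤ2^{2n'} × ℤ4^{n''} with respect to the Doob D(m, n'+n'')-metric. -/

import Mathlib

open SimpleGraph

/-- The box (Cartesian) product of an indexed family of simple graphs. -/
def boxPi {ι : Type*} {V : ι → Type*} (G : ∀ i, SimpleGraph (V i)) :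
    SimpleGraph (∀ i, V i) where
  Adj x y := ∃ i, (G i).Adj (x i) (y i) ∧ ∀ j, j ≠ i → x j = y j
  symm := by
    constructor
    rintro x y ⟨i, h, he⟩
    exact ⟨i, (G i).symm.symm _ _ h, fun j hj => (he j hj).symm⟩
  loopless := by
    constructor
    rintro x ⟨i, h, -⟩
    exact (G i).loopless.irrefl _ h

/-- The Shrikhande graph on `(ZMod 4) × (ZMod 4)`. -/
def Shri : SimpleGraph (ZMod 4 × ZMod 4) where
  Adj a b := a - b ∈
    ({(0, 1), (1, 0), (1, 1), (0, 3), (3, 0), (3, 3)} : Finset (ZMod 4 × ZMod 4))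
  symm := by
    constructor
    have h : ∀ a b : ZMod 4 × ZMod 4,
        a - b ∈ ({(0, 1), (1, 0), (1, 1), (0, 3), (3, 0), (3, 3)} :
          Finset (ZMod 4 × ZMod 4)) →
        b - a ∈ ({(0, 1), (1, 0), (1, 1), (0, 3), (3, 0), (3, 3)} :
          Finset (ZMod 4 × ZMod 4)) := by decide
    exact fun a b hab => h a b hab
  loopless := by
    constructor
    intro a h
    rw [sub_self] at h
    revert h
    decide

/-- `C` is a 1-perfect code in `G`: every vertex is at graph distance at most 1
(i.e., equal or adjacent) from exactly one element of `C`. -/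
def IsPerfectCode {V : Type*} (G : SimpleGraph V) (C : Set V) : Prop :=
  ∀ v : V, ∃! c : V, c ∈ C ∧ (v = c ∨ G.Adj v c)

/-- The vertex set `ℤ₄^{2m} × ℤ₂^{2n'} × ℤ₄^{n''}`, the consecutive pairs of
`ZMod 4`- (resp. `ZMod 2`-) coordinates being grouped together. -/
abbrev DoobVtx (m n' n'' : ℕ) : Type :=
  (Fin m → ZMod 4 × ZMod 4) × (Fin n' → ZMod 2 × ZMod 2) × (Fin n'' → ZMod 4)

/-- The Doob graph `D(m, n' + n'')` on `ℤ₄^{2m} × ℤ₂^{2n'} × ℤ₄^{n''}`. -/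
def DoobGraphZ (m n' n'' : ℕ) : SimpleGraph (DoobVtx m n' n'') :=
  (boxPi fun _ : Fin m => Shri) □
    ((boxPi fun _ : Fin n' => (⊤ : SimpleGraph (ZMod 2 × ZMod 2))) □
      (boxPi fun _ : Fin n'' => (⊤ : SimpleGraph (ZMod 4))))

/-!
Write `Γ = 2g`, `Δ = 2e` and let `H = (ℤ₂²)^g × (ℤ₄²)^e`, where each `ℤ₂²` resp. `ℤ₄²` is read as
`R[ω] = R × R` and `ω` acts by multiplication (so `1 + ω + ω² = 0`). The code is the kernel of a
homomorphism `φ` from the Doob vertex group to `H`. The Doob graph is a Cayley graph, so `ker φ`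
is 1-perfect as soon as `φ` maps the closed unit ball around `0` bijectively onto `H`; since
`|H| = 2^(Γ+2Δ) = 1 + 6m + 3n' + 3n''`, surjectivity suffices.

The nonzero elements of `H` split into orbits `{±x, ±ωx, ±ω²x}` of `-ω`, of size 6 when `2x ≠ 0`
and of size 3 when `2x = 0`. A Shrikhande coordinate with column `h` maps its six neighbours onto
the orbit of `h`, a `ℤ₂²` coordinate with a column `t` of order 2 maps its three nonzero elements
onto the orbit of `t`, and three `ℤ₄` coordinates with columns `w, ωw, ω²w` cover the orbits of
`w` and of `2w`. Counting, there are `m + k` orbits of elements of order 4 and `n' + k` orbits of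
elements of order 2, where `n'' = 3k`, while `2H` has order `2^Δ > n''`, hence at least `k`
nonzero orbits: choose `k` elements `w` whose doubles lie in distinct orbits, then one
representative of each remaining orbit.
-/

open Finset Function
theorem Function.card_image_range_iterate {α : Type*} [DecidableEq α] {f : α → α} {x : α}
    {n : ℕ} (hn : 0 < n) (hx : IsPeriodicPt f n x) :
    #((range n).image fun k => f^[k] x) = minimalPeriod f x := by
  have hpos := hx.minimalPeriod_pos hn
  have hrange : (range n).image (fun k => f^[k] x) =
      (range (minimalPeriod f x)).image fun k => f^[k] x := by
    ext y
    simp only [mem_image, mem_range]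
    constructor
    · rintro ⟨k, -, rfl⟩
      exact ⟨k % minimalPeriod f x, Nat.mod_lt _ hpos, iterate_mod_minimalPeriod_eq⟩
    · rintro ⟨k, hk, rfl⟩
      exact ⟨k, hk.trans_le (hx.minimalPeriod_le hn), rfl⟩
  rw [hrange, card_image_of_injOn (by rw [coe_range]; exact iterate_injOn_Iio_minimalPeriod),
    card_range]

theorem Finset.card_eq_mul_card_image_of_mem_iff {α : Type*} [DecidableEq α] {f : α → Finset α}
    (hf : ∀ x y, y ∈ f x ↔ f y = f x) {s : Finset α} (hs : ∀ x ∈ s, f x ⊆ s) {c : ℕ}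
    (hc : ∀ x ∈ s, #(f x) = c) :
    #s = c * #(s.image f) := by
  rw [card_eq_sum_card_image f s, sum_const_nat (m := c), mul_comm]
  intro _ hb
  obtain ⟨x, hx, rfl⟩ := mem_image.1 hb
  rw [← hc x hx]
  congr 1
  ext y
  simp only [mem_filter, ← hf]
  exact ⟨And.right, fun hy => ⟨hs x hx hy, hy⟩⟩

theorem Finset.exists_fin_injective_comp {α β : Type*} [DecidableEq β] {s : Finset α}
    {f : α → β} {k : ℕ} (hk : k ≤ #(s.image f)) :
    ∃ a : Fin k → α, (∀ j, a j ∈ s) ∧ Injective (f ∘ a) := by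
  obtain ⟨u, hus, hinj, himg⟩ := exists_subset_injOn_image_eq_of_surjOn (s : Set α) (s.image f)
    (by rw [coe_image]; exact Set.surjOn_image f s)
  rw [← himg, card_image_of_injOn hinj] at hk
  obtain ⟨v, hvu, hv⟩ := exists_subset_card_eq hk
  let e := (v.equivFinOfCardEq hv).symm
  refine ⟨fun j => e j, fun j => hus (hvu (e j).2), fun i j hij => e.injective ?_⟩
  exact Subtype.ext (hinj (hvu (e i).2) (hvu (e j).2) hij)

theorem Finset.exists_fin_cover_image {α β : Type*} [DecidableEq β] {s : Finset α}
    {f : α → β} {n k : ℕ} {a : Fin k → α} (ha : ∀ j, a j ∈ s) (hinj : Injective (f ∘ a))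
    (hcard : #(s.image f) = n + k) :
    ∃ b : Fin n → α, (∀ i, b i ∈ s) ∧ ∀ x ∈ s, (∃ j, f (a j) = f x) ∨ ∃ i, f (b i) = f x := by
  set s' := s.filter fun x => ∀ j, f (a j) ≠ f x
  have hs' : s'.image f = s.image f \ univ.image (f ∘ a) := by
    ext y
    simp only [s', mem_image, mem_filter, mem_sdiff, mem_univ, true_and, comp_apply]
    constructor
    · rintro ⟨x, ⟨hx, hxa⟩, rfl⟩
      exact ⟨⟨x, hx, rfl⟩, fun ⟨j, hj⟩ => hxa j hj⟩
    · rintro ⟨⟨x, hx, rfl⟩, hxa⟩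
      exact ⟨x, ⟨hx, fun j hj => hxa ⟨j, hj⟩⟩, rfl⟩
  have hcard' : #(s'.image f) = n := by
    rw [hs', card_sdiff_of_subset, card_image_of_injective _ hinj, card_univ, Fintype.card_fin,
      hcard, Nat.add_sub_cancel]
    rintro _ hy
    obtain ⟨j, -, rfl⟩ := mem_image.1 hy
    exact mem_image_of_mem f (ha j)
  obtain ⟨b, hbs, hbinj⟩ := exists_fin_injective_comp hcard'.ge
  have hb : univ.image (f ∘ b) = s'.image f := by
    refine eq_of_subset_of_card_le ?_ ?_
    · rintro _ hy
      obtain ⟨i, -, rfl⟩ := mem_image.1 hy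
      exact mem_image_of_mem f (hbs i)
    · rw [hcard', card_image_of_injective _ hbinj, card_univ, Fintype.card_fin]
  refine ⟨b, fun i => (mem_filter.1 (hbs i)).1, fun x hx => ?_⟩
  by_cases hxa : ∃ j, f (a j) = f x
  · exact Or.inl hxa
  · have hfx : f x ∈ univ.image (f ∘ b) :=
      hb ▸ mem_image_of_mem f (mem_filter.2 ⟨hx, fun j hj => hxa ⟨j, hj⟩⟩)
    obtain ⟨i, -, hi⟩ := mem_image.1 hfx
    exact Or.inr ⟨i, hi⟩

theorem card_two_torsion_mul_card_image_two_nsmul {H : Type*} [AddCommGroup H] [Fintype H]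
    [DecidableEq H] :
    #({x | 2 • x = 0} : Finset H) * #(univ.image fun x : H => 2 • x) = Fintype.card H := by
  have h := (nsmulAddMonoidHom 2 : H →+ H).ker.card_mul_index
  rw [AddSubgroup.index_ker, Nat.card_eq_fintype_card (α := H)] at h
  convert h using 2
  · rw [Nat.card_eq_fintype_card, Fintype.card_subtype]
    simp [AddMonoidHom.mem_ker]
  · rw [Nat.card_eq_fintype_card, Fintype.card_subtype]
    congr 1
    ext
    simp [AddMonoidHom.mem_range]

theorem Pi.addMonoidHomAddEquiv_symm_apply_single {I : Type*} [Fintype I] [DecidableEq I]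
    {M : I → Type*} [∀ i, AddCommMonoid (M i)] {M' : Type*} [AddCommMonoid M']
    (f : ∀ i, M i →+ M') (i : I) (x : M i) :
    (Pi.addMonoidHomAddEquiv M M').symm f (Pi.single i x) = f i x :=
  DFunLike.congr_fun (congr_fun ((Pi.addMonoidHomAddEquiv M M').apply_symm_apply f) i) x

def IsCayleyGraph {V D : Type*} [AddGroup V] (G : SimpleGraph V) (ι : D → V) : Prop :=
  ∀ x y, G.Adj x y ↔ ∃ d, y - x = ι d

section CayleyGraph

variable {V W D E : Type*} [AddGroup V] [AddGroup W]

theorem isCayleyGraph_of_adj_add_right {G : SimpleGraph V}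
    (hG : ∀ x y z, G.Adj (x + z) (y + z) ↔ G.Adj x y) :
    IsCayleyGraph G (Subtype.val : {s // G.Adj s 0} → V) := by
  intro x y
  have key : G.Adj (y - x) 0 ↔ G.Adj x y := by
    rw [G.adj_comm, ← hG x y (-x), add_neg_cancel, sub_eq_add_neg]
  exact ⟨fun h => ⟨⟨y - x, key.2 h⟩, rfl⟩, fun ⟨d, hd⟩ => key.1 (hd ▸ d.2)⟩

theorem isCayleyGraph_boxPi {I : Type*} [DecidableEq I] {V : I → Type*} [∀ i, AddGroup (V i)]
    {D : I → Type*} {G : ∀ i, SimpleGraph (V i)} {ι : ∀ i, D i → V i}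
    (hG : ∀ i, IsCayleyGraph (G i) (ι i)) :
    IsCayleyGraph (boxPi G) fun d : Σ i, D i => Pi.single d.1 (ι d.1 d.2) := by
  intro x y
  have hG' : ∀ i a b, (G i).Adj a b ↔ ∃ d, b - a = ι i d := hG
  change (∃ i, (G i).Adj (x i) (y i) ∧ _) ↔ _
  simp only [hG']
  constructor
  · rintro ⟨i, ⟨d, hd⟩, hxy⟩
    refine ⟨⟨i, d⟩, funext fun j => ?_⟩
    by_cases hji : j = i
    · subst hji
      simpa using hd
    · simp [hji, hxy j hji]
  · rintro ⟨⟨i, d⟩, hd⟩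
    refine ⟨i, ⟨d, by simpa using congrFun hd i⟩, fun j hji => ?_⟩
    simpa [hji, sub_eq_zero, eq_comm] using congrFun hd j

theorem isCayleyGraph_boxProd {G : SimpleGraph V} {G' : SimpleGraph W} {ι : D → V} {ι' : E → W}
    (hG : IsCayleyGraph G ι) (hG' : IsCayleyGraph G' ι') :
    IsCayleyGraph (G □ G') (Sum.elim (fun d => (ι d, 0)) fun d => (0, ι' d)) := by
  intro x y
  simp [boxProd_adj, hG _ _, hG' _ _, Prod.ext_iff, sub_eq_zero, eq_comm, and_comm]

theorem IsCayleyGraph.isPerfectCode_ker {V H : Type*} [AddCommGroup V] [AddGroup H]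
    {G : SimpleGraph V} {ι : D → V} (hG : IsCayleyGraph G ι) (φ : V →+ H)
    (hφ : Bijective fun o : Option D => φ (o.elim 0 ι)) :
    IsPerfectCode G (φ.ker : Set V) := by
  intro v
  obtain ⟨o, ho⟩ := hφ.2 (-φ v)
  refine ⟨v + o.elim 0 ι, ⟨?_, ?_⟩, ?_⟩
  · simp only [SetLike.mem_coe, AddMonoidHom.mem_ker, map_add, ho, add_neg_cancel]
  · cases o with
    | none => simp
    | some d => exact Or.inr ((hG _ _).2 ⟨d, by simp⟩)
  · rintro c ⟨hc, hvc⟩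
    obtain ⟨o', ho'⟩ : ∃ o' : Option D, c - v = o'.elim 0 ι := by
      rcases hvc with rfl | hadj
      · exact ⟨none, sub_self _⟩
      · obtain ⟨d, hd⟩ := (hG v c).1 hadj
        exact ⟨some d, hd⟩
    have hφc : φ c = 0 := hc
    obtain rfl : o' = o := hφ.1 <| by
      simp only [← ho', map_sub, hφc, zero_sub, ho]
    rw [← ho', add_sub_cancel]

end CayleyGraph

instance : DecidableRel Shri.Adj := fun a b => by unfold Shri; infer_instance

theorem shri_adj_add_right (x y z : ZMod 4 × ZMod 4) :
    Shri.Adj (x + z) (y + z) ↔ Shri.Adj x y := by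
  change (x + z) - (y + z) ∈ _ ↔ x - y ∈ _
  rw [add_sub_add_right_eq_sub]

theorem top_adj_add_right {V : Type*} [AddGroup V] (x y z : V) :
    (⊤ : SimpleGraph V).Adj (x + z) (y + z) ↔ (⊤ : SimpleGraph V).Adj x y := by
  simp

section DoobCode

variable {H : Type*} [AddCommGroup H] {m n' n'' : ℕ}

def doobCheckHom (a : Fin m → ZMod 4 × ZMod 4 →+ H) (b : Fin n' → ZMod 2 × ZMod 2 →+ H)
    (c : Fin n'' → ZMod 4 →+ H) : DoobVtx m n' n'' →+ H :=
  ((Pi.addMonoidHomAddEquiv _ H).symm a).coprod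
    (((Pi.addMonoidHomAddEquiv _ H).symm b).coprod ((Pi.addMonoidHomAddEquiv _ H).symm c))

theorem isPerfectCode_ker_doobCheckHom [Fintype H] (a : Fin m → ZMod 4 × ZMod 4 →+ H)
    (b : Fin n' → ZMod 2 × ZMod 2 →+ H) (c : Fin n'' → ZMod 4 →+ H)
    (hcard : Fintype.card H = 6 * m + 3 * n' + 3 * n'' + 1)
    (hcover : ∀ x, x ≠ 0 → (∃ i s, Shri.Adj s 0 ∧ a i s = x) ∨ (∃ j s, s ≠ 0 ∧ b j s = x) ∨
      ∃ l r, r ≠ 0 ∧ c l r = x) :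
    IsPerfectCode (DoobGraphZ m n' n'') ((doobCheckHom a b c).ker : Set (DoobVtx m n' n'')) := by
  have hG : IsCayleyGraph (DoobGraphZ m n' n'') _ :=
    isCayleyGraph_boxProd (isCayleyGraph_boxPi fun _ => isCayleyGraph_of_adj_add_right
      shri_adj_add_right) (isCayleyGraph_boxProd
        (isCayleyGraph_boxPi fun _ => isCayleyGraph_of_adj_add_right top_adj_add_right)
        (isCayleyGraph_boxPi fun _ => isCayleyGraph_of_adj_add_right top_adj_add_right))
  refine hG.isPerfectCode_ker _ ((Fintype.bijective_iff_surjective_and_card _).2 ⟨?_, ?_⟩)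
  · intro x
    by_cases hx : x = 0
    · exact ⟨none, by simp [hx]⟩
    rcases hcover x hx with ⟨i, s, hs, rfl⟩ | ⟨j, s, hs, rfl⟩ | ⟨l, r, hr, rfl⟩
    · exact ⟨some (.inl ⟨i, s, hs⟩), by
        simp [doobCheckHom, Pi.addMonoidHomAddEquiv_symm_apply_single]⟩
    · exact ⟨some (.inr (.inl ⟨j, s, by simpa using hs⟩)), by
        simp [doobCheckHom, Pi.addMonoidHomAddEquiv_symm_apply_single]⟩
    · exact ⟨some (.inr (.inr ⟨l, r, by simpa using hr⟩)), by
        simp [doobCheckHom, Pi.addMonoidHomAddEquiv_symm_apply_single]⟩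
  · have h6 : Fintype.card {s // Shri.Adj s 0} = 6 := by decide
    have h3 : Fintype.card {s : ZMod 2 × ZMod 2 // (⊤ : SimpleGraph _).Adj s 0} = 3 := by decide
    have h3' : Fintype.card {s : ZMod 4 // (⊤ : SimpleGraph _).Adj s 0} = 3 := by decide
    simp only [Fintype.card_option, Fintype.card_sum, Fintype.card_sigma, h6, h3, h3',
      sum_const, card_univ, Fintype.card_fin, smul_eq_mul, hcard]
    ring

end DoobCode

section SignedOrbit

variable {H : Type*} [AddCommGroup H] {ω : H →+ H} {x y : H}

theorem map_map_map_eq_self (hω : ∀ x, x + ω x + ω (ω x) = 0) (x : H) : ω (ω (ω x)) = x :=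
  calc ω (ω (ω x)) = (ω x + ω (ω x) + ω (ω (ω x))) - (x + ω x + ω (ω x)) + x := by abel
    _ = x := by rw [hω, hω, sub_zero, zero_add]

theorem eq_zero_of_map_eq_self (hω : ∀ x, x + ω x + ω (ω x) = 0) (h4 : ∀ x : H, 4 • x = 0)
    (h : ω x = x) : x = 0 := by
  have h3 := hω x
  rw [h, h] at h3
  calc x = 4 • x - (x + x + x) := by abel
    _ = 0 := by rw [h4, h3, sub_zero]

theorem neg_iterate_two_apply (x : H) : (-ω)^[2] x = ω (ω x) := by
  simp [iterate_succ_apply']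

theorem neg_iterate_three_apply (hω : ∀ x, x + ω x + ω (ω x) = 0) (x : H) :
    (-ω)^[3] x = -x := by
  simp [iterate_succ_apply', map_map_map_eq_self hω]

theorem isPeriodicPt_neg_six (hω : ∀ x, x + ω x + ω (ω x) = 0) (x : H) :
    IsPeriodicPt (⇑(-ω)) 6 x := by
  change (-ω)^[3 + 3] x = x
  rw [iterate_add_apply, neg_iterate_three_apply hω, neg_iterate_three_apply hω, neg_neg]

theorem minimalPeriod_neg_of_two_nsmul_ne_zero (hω : ∀ x, x + ω x + ω (ω x) = 0)
    (h4 : ∀ x : H, 4 • x = 0) (hx : 2 • x ≠ 0) : minimalPeriod (⇑(-ω)) x = 6 := by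
  have h2 : ¬ IsPeriodicPt (⇑(-ω)) 2 x := by
    intro h
    have hωω : ω (ω x) = x := (neg_iterate_two_apply x).symm.trans h.eq
    have hωx : ω x = x := by
      conv_rhs => rw [← map_map_map_eq_self hω x, hωω]
    exact hx (by rw [eq_zero_of_map_eq_self hω h4 hωx, smul_zero])
  have h3 : ¬ IsPeriodicPt (⇑(-ω)) 3 x := by
    intro h
    have hneg : -x = x := (neg_iterate_three_apply hω x).symm.trans h.eq
    exact hx (by rw [two_nsmul]; nth_rewrite 1 [← hneg]; exact neg_add_cancel x)
  rw [isPeriodicPt_iff_minimalPeriod_dvd] at h2 h3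
  have h6 := (isPeriodicPt_neg_six hω x).minimalPeriod_dvd
  have := Nat.le_of_dvd (by norm_num) h6
  interval_cases minimalPeriod (⇑(-ω)) x <;> omega

theorem minimalPeriod_neg_of_two_nsmul_eq_zero (hω : ∀ x, x + ω x + ω (ω x) = 0)
    (h4 : ∀ x : H, 4 • x = 0) (hx0 : x ≠ 0) (hx : 2 • x = 0) :
    minimalPeriod (⇑(-ω)) x = 3 := by
  have hneg : -x = x := neg_eq_of_add_eq_zero_right (by rwa [two_nsmul] at hx)
  refine minimalPeriod_eq_prime ((neg_iterate_three_apply hω x).trans hneg) fun h => hx0 ?_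
  have hωx : ω x = x := by
    rw [← neg_neg (ω x), ← AddMonoidHom.neg_apply, h.eq, hneg]
  exact eq_zero_of_map_eq_self hω h4 hωx

variable [DecidableEq H]

variable (ω) in
def signedOrbit (x : H) : Finset H :=
  (range 6).image fun n => (-ω)^[n] x

theorem mem_signedOrbit (hω : ∀ x, x + ω x + ω (ω x) = 0) :
    y ∈ signedOrbit ω x ↔ ∃ n, (-ω)^[n] x = y := by
  simp only [signedOrbit, mem_image, mem_range]
  refine ⟨fun ⟨n, _, h⟩ => ⟨n, h⟩, ?_⟩
  rintro ⟨n, rfl⟩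
  exact ⟨n % 6, Nat.mod_lt _ (by norm_num), (isPeriodicPt_neg_six hω x).iterate_mod_apply n⟩

theorem mem_signedOrbit_self (x : H) : x ∈ signedOrbit ω x :=
  mem_image.2 ⟨0, by simp, rfl⟩

theorem signedOrbit_eq_of_mem (hω : ∀ x, x + ω x + ω (ω x) = 0) (h : y ∈ signedOrbit ω x) :
    signedOrbit ω y = signedOrbit ω x := by
  obtain ⟨a, rfl⟩ := (mem_signedOrbit hω).1 h
  ext z
  simp only [mem_signedOrbit hω]
  constructor
  · rintro ⟨n, rfl⟩
    exact ⟨n + a, iterate_add_apply _ _ _ _⟩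
  · rintro ⟨n, rfl⟩
    refine ⟨n + 5 * a, ?_⟩
    rw [← iterate_add_apply, show n + 5 * a + a = n + 6 * a by ring, iterate_add_apply,
      ((isPeriodicPt_neg_six hω x).mul_const a).eq]

theorem mem_signedOrbit_iff_eq (hω : ∀ x, x + ω x + ω (ω x) = 0) :
    y ∈ signedOrbit ω x ↔ signedOrbit ω y = signedOrbit ω x :=
  ⟨signedOrbit_eq_of_mem hω, fun h => h ▸ mem_signedOrbit_self y⟩

theorem mem_signedOrbit_iff (hω : ∀ x, x + ω x + ω (ω x) = 0) :
    y ∈ signedOrbit ω x ↔ y = x ∨ y = -ω x ∨ y = ω (ω x) ∨ y = -x ∨ y = ω x ∨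
      y = -ω (ω x) := by
  simp [signedOrbit, show range 6 = {0, 1, 2, 3, 4, 5} from rfl, iterate_succ_apply',
    map_map_map_eq_self hω, eq_comm]

theorem signedOrbit_zero : signedOrbit ω 0 = {0} := by
  simp only [signedOrbit, iterate_map_zero]
  exact image_const ⟨0, by simp⟩ 0

theorem two_nsmul_mem_signedOrbit (hω : ∀ x, x + ω x + ω (ω x) = 0)
    (h : y ∈ signedOrbit ω x) : 2 • y ∈ signedOrbit ω (2 • x) := by
  obtain ⟨n, rfl⟩ := (mem_signedOrbit hω).1 h
  exact (mem_signedOrbit hω).2 ⟨n, iterate_map_nsmul _ _ _ _⟩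

theorem signedOrbit_two_nsmul_eq_of_eq (hω : ∀ x, x + ω x + ω (ω x) = 0)
    (h : signedOrbit ω x = signedOrbit ω y) : signedOrbit ω (2 • x) = signedOrbit ω (2 • y) := by
  rw [← mem_signedOrbit_iff_eq hω] at h ⊢
  exact two_nsmul_mem_signedOrbit hω h

theorem ne_zero_of_mem_signedOrbit (hω : ∀ x, x + ω x + ω (ω x) = 0)
    (h : y ∈ signedOrbit ω x) (hx : x ≠ 0) : y ≠ 0 := by
  rintro rfl
  have hx0 : x ∈ signedOrbit ω 0 := signedOrbit_eq_of_mem hω h ▸ mem_signedOrbit_self x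
  rw [signedOrbit_zero, mem_singleton] at hx0
  exact hx hx0

theorem two_nsmul_eq_zero_of_mem_signedOrbit (hω : ∀ x, x + ω x + ω (ω x) = 0)
    (h : y ∈ signedOrbit ω x) (hx : 2 • x = 0) : 2 • y = 0 := by
  simpa [hx, signedOrbit_zero] using two_nsmul_mem_signedOrbit hω h

theorem card_signedOrbit_of_two_nsmul_ne_zero (hω : ∀ x, x + ω x + ω (ω x) = 0)
    (h4 : ∀ x : H, 4 • x = 0) (hx : 2 • x ≠ 0) : #(signedOrbit ω x) = 6 := by
  rw [signedOrbit, card_image_range_iterate (by norm_num) (isPeriodicPt_neg_six hω x),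
    minimalPeriod_neg_of_two_nsmul_ne_zero hω h4 hx]

theorem card_signedOrbit_of_two_nsmul_eq_zero (hω : ∀ x, x + ω x + ω (ω x) = 0)
    (h4 : ∀ x : H, 4 • x = 0) (hx0 : x ≠ 0) (hx : 2 • x = 0) : #(signedOrbit ω x) = 3 := by
  rw [signedOrbit, card_image_range_iterate (by norm_num) (isPeriodicPt_neg_six hω x),
    minimalPeriod_neg_of_two_nsmul_eq_zero hω h4 hx0 hx]

end SignedOrbit

section SignedOrbitClasses

variable {H : Type*} [AddCommGroup H] [DecidableEq H] [Fintype H] {ω : H →+ H}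

theorem six_mul_card_signedOrbits_add_card_two_torsion (hω : ∀ x, x + ω x + ω (ω x) = 0)
    (h4 : ∀ x : H, 4 • x = 0) :
    6 * #(({x | 2 • x ≠ 0} : Finset H).image (signedOrbit ω)) + #({x | 2 • x = 0} : Finset H) =
      Fintype.card H := by
  rw [← card_eq_mul_card_image_of_mem_iff (fun _ _ => mem_signedOrbit_iff_eq hω) ?_ ?_,
    add_comm, card_filter_add_card_filter_not, card_univ]
  · intro x hx y hy
    simp only [mem_filter, mem_univ, true_and] at hx ⊢
    exact ne_zero_of_mem_signedOrbit hω (two_nsmul_mem_signedOrbit hω hy) hx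
  · intro x hx
    exact card_signedOrbit_of_two_nsmul_ne_zero hω h4 (mem_filter.1 hx).2

theorem three_mul_card_signedOrbits_two_torsion_add_one (hω : ∀ x, x + ω x + ω (ω x) = 0)
    (h4 : ∀ x : H, 4 • x = 0) :
    3 * #((({x | 2 • x = 0} : Finset H).erase 0).image (signedOrbit ω)) + 1 =
      #({x | 2 • x = 0} : Finset H) := by
  rw [← card_eq_mul_card_image_of_mem_iff (fun _ _ => mem_signedOrbit_iff_eq hω) ?_ ?_,
    card_erase_add_one (by simp)]
  · intro x hx y hy
    simp only [mem_erase, mem_filter, mem_univ, true_and] at hx ⊢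
    exact ⟨ne_zero_of_mem_signedOrbit hω hy hx.1, two_nsmul_eq_zero_of_mem_signedOrbit hω hy hx.2⟩
  · intro x hx
    simp only [mem_erase, mem_filter, mem_univ, true_and] at hx
    exact card_signedOrbit_of_two_nsmul_eq_zero hω h4 hx.1 hx.2

theorem three_mul_card_signedOrbits_doubles_add_one (hω : ∀ x, x + ω x + ω (ω x) = 0)
    (h4 : ∀ x : H, 4 • x = 0) :
    3 * #(({w | 2 • w ≠ 0} : Finset H).image fun w => signedOrbit ω (2 • w)) + 1 =
      #(univ.image fun w : H => 2 • w) := by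
  have himage : ({w | 2 • w ≠ 0} : Finset H).image (fun w => signedOrbit ω (2 • w)) =
      ((univ.image fun w : H => 2 • w).erase 0).image (signedOrbit ω) := by
    ext
    simp
  rw [himage, ← card_eq_mul_card_image_of_mem_iff (fun _ _ => mem_signedOrbit_iff_eq hω) ?_ ?_,
    card_erase_add_one (mem_image.2 ⟨0, mem_univ _, smul_zero 2⟩)]
  · intro x hx y hy
    simp only [mem_erase, mem_image, mem_univ, true_and] at hx ⊢
    obtain ⟨hx0, w, rfl⟩ := hx
    obtain ⟨n, rfl⟩ := (mem_signedOrbit hω).1 hy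
    exact ⟨ne_zero_of_mem_signedOrbit hω hy hx0, _, (iterate_map_nsmul _ _ _ _).symm⟩
  · intro x hx
    simp only [mem_erase, mem_image, mem_univ, true_and] at hx
    obtain ⟨hx0, w, rfl⟩ := hx
    exact card_signedOrbit_of_two_nsmul_eq_zero hω h4 hx0 (by rw [smul_smul]; exact h4 w)

theorem exists_signedOrbit_cover (hω : ∀ x, x + ω x + ω (ω x) = 0) (h4 : ∀ x : H, 4 • x = 0)
    {m n' k : ℕ}
    (hN : #(({x | 2 • x ≠ 0} : Finset H).image (signedOrbit ω)) = m + k)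
    (hT : #((({x | 2 • x = 0} : Finset H).erase 0).image (signedOrbit ω)) = n' + k)
    (hD : k ≤ #(({w | 2 • w ≠ 0} : Finset H).image fun w => signedOrbit ω (2 • w))) :
    ∃ (h : Fin m → H) (t : Fin n' → H) (w : Fin k → H), (∀ j, 2 • t j = 0) ∧
      ∀ x, x ≠ 0 → (∃ i, x ∈ signedOrbit ω (h i)) ∨ (∃ j, x ∈ signedOrbit ω (t j)) ∨
        ∃ j, x ∈ signedOrbit ω (w j) ∨ x ∈ signedOrbit ω (2 • w j) := by
  obtain ⟨w, hw, hwinj⟩ := exists_fin_injective_comp hD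
  simp only [mem_filter, mem_univ, true_and] at hw
  obtain ⟨h, -, hh⟩ := exists_fin_cover_image (f := signedOrbit ω) (a := w) (by simpa using hw)
    (fun i j hij => hwinj (signedOrbit_two_nsmul_eq_of_eq hω hij)) hN
  obtain ⟨t, ht, htw⟩ := exists_fin_cover_image (a := fun j => 2 • w j)
    (by simp [hw, smul_smul, h4]) hwinj hT
  refine ⟨h, t, w, fun j => by simpa using (mem_erase.1 (ht j)).2, fun x hx => ?_⟩
  have hmem {y : H} (hy : signedOrbit ω y = signedOrbit ω x) : x ∈ signedOrbit ω y :=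
    (mem_signedOrbit_iff_eq hω).2 hy.symm
  by_cases hx2 : 2 • x = 0
  · rcases htw x (by simp [hx, hx2]) with ⟨j, hj⟩ | ⟨i, hi⟩
    · exact Or.inr (Or.inr ⟨j, Or.inr (hmem hj)⟩)
    · exact Or.inr (Or.inl ⟨i, hmem hi⟩)
  · rcases hh x (by simp [hx2]) with ⟨j, hj⟩ | ⟨i, hi⟩
    · exact Or.inr (Or.inr ⟨j, Or.inl (hmem hj)⟩)
    · exact Or.inl ⟨i, hmem hi⟩

end SignedOrbitClasses

section Columns

variable {H : Type*} [AddCommGroup H] {ω : H →+ H}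

def zmodHom (n : ℕ) (a : H) (ha : n • a = 0) : ZMod n →+ H :=
  ZMod.lift n ⟨zmultiplesHom H a, by simpa using ha⟩

theorem zmodHom_one (n : ℕ) (a : H) (ha : n • a = 0) : zmodHom n a ha 1 = a := by
  rw [← Int.cast_one]
  exact (ZMod.lift_coe n _ 1).trans (one_zsmul a)

theorem zmodHom_four_two (a : H) (ha : 4 • a = 0) : zmodHom 4 a ha 2 = 2 • a := by
  rw [show (2 : ZMod 4) = 1 + 1 from rfl, map_add, zmodHom_one, two_nsmul]

theorem zmodHom_four_three (a : H) (ha : 4 • a = 0) : zmodHom 4 a ha 3 = -a := by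
  rw [show (3 : ZMod 4) = -1 from rfl, map_neg, zmodHom_one]

variable (ω) in
def shriColumn (h4 : ∀ x : H, 4 • x = 0) (h : H) : ZMod 4 × ZMod 4 →+ H :=
  (zmodHom 4 h (h4 h)).coprod (zmodHom 4 (ω h) (h4 (ω h)))

variable (ω) in
def torsionColumn (t : H) (ht : 2 • t = 0) : ZMod 2 × ZMod 2 →+ H :=
  (zmodHom 2 t ht).coprod (zmodHom 2 (ω t) (by rw [← map_nsmul, ht, map_zero]))

variable [DecidableEq H]

theorem exists_shriColumn_eq (hω : ∀ x, x + ω x + ω (ω x) = 0) (h4 : ∀ x : H, 4 • x = 0)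
    {h x : H} (hx : x ∈ signedOrbit ω h) : ∃ s, Shri.Adj s 0 ∧ shriColumn ω h4 h s = x := by
  have hωω : ω (ω h) = -(h + ω h) := eq_neg_of_add_eq_zero_right (hω h)
  rcases (mem_signedOrbit_iff hω).1 hx with rfl | rfl | rfl | rfl | rfl | rfl
  · exact ⟨(1, 0), by decide, by simp [shriColumn, zmodHom_one]⟩
  · exact ⟨(0, 3), by decide, by simp [shriColumn, zmodHom_four_three]⟩
  · exact ⟨(3, 3), by decide, by simp [shriColumn, zmodHom_four_three, hωω, add_comm]⟩
  · exact ⟨(3, 0), by decide, by simp [shriColumn, zmodHom_four_three]⟩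
  · exact ⟨(0, 1), by decide, by simp [shriColumn, zmodHom_one]⟩
  · exact ⟨(1, 1), by decide, by simp [shriColumn, zmodHom_one, hωω]⟩

theorem exists_torsionColumn_eq (hω : ∀ x, x + ω x + ω (ω x) = 0) {t x : H} (ht : 2 • t = 0)
    (hx : x ∈ signedOrbit ω t) : ∃ s, s ≠ 0 ∧ torsionColumn ω t ht s = x := by
  have hneg {y : H} (hy : 2 • y = 0) : -y = y :=
    neg_eq_of_add_eq_zero_right (by rwa [two_nsmul] at hy)
  have hωt : 2 • ω t = 0 := by rw [← map_nsmul, ht, map_zero]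
  have hωω : ω (ω t) = t + ω t := by
    rw [eq_neg_of_add_eq_zero_right (hω t), hneg (by rw [smul_add, ht, hωt, add_zero])]
  rcases (mem_signedOrbit_iff hω).1 hx with rfl | rfl | rfl | rfl | rfl | rfl
  · exact ⟨(1, 0), by decide, by simp [torsionColumn, zmodHom_one]⟩
  · exact ⟨(0, 1), by decide, by simp [torsionColumn, zmodHom_one, hneg hωt]⟩
  · exact ⟨(1, 1), by decide, by simp [torsionColumn, zmodHom_one, hωω]⟩
  · exact ⟨(1, 0), by decide, by simp [torsionColumn, zmodHom_one, hneg ht]⟩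
  · exact ⟨(0, 1), by decide, by simp [torsionColumn, zmodHom_one]⟩
  · exact ⟨(1, 1), by decide, by
      simp [torsionColumn, zmodHom_one, hωω, hneg ht, hneg hωt, add_comm]⟩

theorem exists_zmodHom_iterate_eq (hω : ∀ x, x + ω x + ω (ω x) = 0) (h4 : ∀ x : H, 4 • x = 0)
    {w x : H} (hx : x ∈ signedOrbit ω w ∨ x ∈ signedOrbit ω (2 • w)) :
    ∃ (r : Fin 3) (c : ZMod 4), c ≠ 0 ∧ zmodHom 4 (ω^[r] w) (h4 _) c = x := by
  have hneg (y : H) : -((2 : ℕ) • y) = (2 : ℕ) • y :=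
    neg_eq_of_add_eq_zero_right (by rw [← add_nsmul]; exact h4 y)
  rcases hx with hx | hx <;>
    rcases (mem_signedOrbit_iff hω).1 hx with rfl | rfl | rfl | rfl | rfl | rfl
  · exact ⟨0, 1, by decide, by simp [zmodHom_one]⟩
  · exact ⟨1, 3, by decide, by simp [zmodHom_four_three]⟩
  · exact ⟨2, 1, by decide, by simp [zmodHom_one]⟩
  · exact ⟨0, 3, by decide, by simp [zmodHom_four_three]⟩
  · exact ⟨1, 1, by decide, by simp [zmodHom_one]⟩
  · exact ⟨2, 3, by decide, by simp [zmodHom_four_three]⟩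
  · exact ⟨0, 2, by decide, by simp [zmodHom_four_two]⟩
  · exact ⟨1, 2, by decide, by simp [zmodHom_four_two, hneg]⟩
  · exact ⟨2, 2, by decide, by simp [zmodHom_four_two]⟩
  · exact ⟨0, 2, by decide, by simp [zmodHom_four_two, hneg]⟩
  · exact ⟨1, 2, by decide, by simp [zmodHom_four_two]⟩
  · exact ⟨2, 2, by decide, by simp [zmodHom_four_two, hneg]⟩

theorem isPerfectCode_ker_of_signedOrbit_cover [Fintype H] (hω : ∀ x, x + ω x + ω (ω x) = 0)
    (h4 : ∀ x : H, 4 • x = 0) {m n' k : ℕ} (hcard : Fintype.card H = 6 * m + 3 * n' + 9 * k + 1)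
    {h : Fin m → H} {t : Fin n' → H} (ht : ∀ j, 2 • t j = 0) {w : Fin k → H}
    (hcover : ∀ x, x ≠ 0 → (∃ i, x ∈ signedOrbit ω (h i)) ∨ (∃ j, x ∈ signedOrbit ω (t j)) ∨
      ∃ j, x ∈ signedOrbit ω (w j) ∨ x ∈ signedOrbit ω (2 • w j)) :
    IsPerfectCode (DoobGraphZ m n' (k * 3))
      ((doobCheckHom (fun i => shriColumn ω h4 (h i)) (fun j => torsionColumn ω (t j) (ht j))
        fun l : Fin (k * 3) =>
          zmodHom 4 (ω^[(finProdFinEquiv.symm l).2] (w (finProdFinEquiv.symm l).1)) (h4 _)).ker :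
        Set (DoobVtx m n' (k * 3))) := by
  refine isPerfectCode_ker_doobCheckHom _ _ _ (by rw [hcard]; ring) fun x hx => ?_
  rcases hcover x hx with ⟨i, hi⟩ | ⟨j, hj⟩ | ⟨j, hj⟩
  · obtain ⟨s, hs, rfl⟩ := exists_shriColumn_eq hω h4 hi
    exact Or.inl ⟨i, s, hs, rfl⟩
  · obtain ⟨s, hs, rfl⟩ := exists_torsionColumn_eq hω (ht j) hj
    exact Or.inr (Or.inl ⟨j, s, hs, rfl⟩)
  · obtain ⟨r, c, hc, rfl⟩ := exists_zmodHom_iterate_eq hω h4 hj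
    exact Or.inr (Or.inr ⟨finProdFinEquiv (j, r), c, hc, by simp⟩)

end Columns

-- Multiplication by `ω` on `A[ω] = A × A` (basis `1, ω`, with `ω² = -1 - ω`).
def mulOmega (A : Type*) [AddCommGroup A] : A × A →+ A × A :=
  (-AddMonoidHom.snd A A).prod (AddMonoidHom.fst A A - AddMonoidHom.snd A A)

theorem add_mulOmega_add_mulOmega_mulOmega {A : Type*} [AddCommGroup A] (p : A × A) :
    p + mulOmega A p + mulOmega A (mulOmega A p) = 0 := by
  ext <;> simp [mulOmega] <;> abel

abbrev CheckGroup (g e : ℕ) : Type :=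
  (Fin g → ZMod 2 × ZMod 2) × (Fin e → ZMod 4 × ZMod 4)

namespace CheckGroup

variable {g e : ℕ}

def omega (g e : ℕ) : CheckGroup g e →+ CheckGroup g e :=
  ((mulOmega _).compLeft (Fin g)).prodMap ((mulOmega _).compLeft (Fin e))

theorem add_omega_add_omega_omega (x : CheckGroup g e) :
    x + omega g e x + omega g e (omega g e x) = 0 :=
  Prod.ext (funext fun i => add_mulOmega_add_mulOmega_mulOmega (x.1 i))
    (funext fun i => add_mulOmega_add_mulOmega_mulOmega (x.2 i))

theorem four_nsmul_eq_zero (x : CheckGroup g e) : 4 • x = 0 :=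
  Prod.ext (funext fun i => (by decide : ∀ a : ZMod 2 × ZMod 2, 4 • a = 0) (x.1 i))
    (funext fun i => (by decide : ∀ a : ZMod 4 × ZMod 4, 4 • a = 0) (x.2 i))

theorem card_eq : Fintype.card (CheckGroup g e) = 4 ^ (g + 2 * e) := by
  simp [pow_add, pow_mul]

theorem card_two_torsion : #({x | 2 • x = 0} : Finset (CheckGroup g e)) = 4 ^ (g + e) := by
  have htors : ∀ x : CheckGroup g e, 2 • x = 0 ↔ True ∧ ∀ i, 2 • x.2 i = 0 := fun x =>
    ⟨fun h => ⟨trivial, fun i => congrFun (congrArg Prod.snd h) i⟩, fun ⟨_, h⟩ =>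
      Prod.ext (funext fun i => (by decide : ∀ a : ZMod 2 × ZMod 2, 2 • a = 0) (x.1 i)) (funext h)⟩
  have h4 : Fintype.card {a : ZMod 4 × ZMod 4 // 2 • a = 0} = 4 := by decide
  rw [← Fintype.card_subtype, Fintype.card_congr ((Equiv.subtypeEquivRight htors).trans
    (Equiv.subtypeProdEquivProd (p := fun _ => True)
      (q := fun b : Fin e → ZMod 4 × ZMod 4 => ∀ i, 2 • b i = 0))), Fintype.card_prod,
    Fintype.card_congr (Equiv.subtypePiEquivPi (β := fun _ : Fin e => ZMod 4 × ZMod 4)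
      (p := fun _ b => 2 • b = 0)), Fintype.card_pi]
  simp only [h4]
  simp [pow_add]

theorem card_image_two_nsmul : #(univ.image fun x : CheckGroup g e => 2 • x) = 4 ^ e := by
  have h := card_two_torsion_mul_card_image_two_nsmul (H := CheckGroup g e)
  rw [card_two_torsion, card_eq, show g + 2 * e = g + e + e by ring, pow_add _ (g + e) e] at h
  exact Nat.eq_of_mul_eq_mul_left (pow_pos (by norm_num) _) h

end CheckGroup

theorem exists_additive_perfect_code_even_Delta_general (Γ Δ m n' n'' : ℕ)
    (hΓ : Even Γ) (hΔeven : Even Δ)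
    (h1 : 3 * (2 * m + n' + n'') + 1 = 2 ^ (Γ + 2 * Δ))
    (h2 : 3 * n' + n'' + 1 = 2 ^ (Γ + Δ))
    (h3 : n'' + 1 ≤ 2 ^ Δ) :
    ∃ C : AddSubgroup (DoobVtx m n' n''),
      IsPerfectCode (DoobGraphZ m n' n'') (C : Set (DoobVtx m n' n'')) := by
  obtain ⟨g, rfl⟩ := hΓ.two_dvd
  obtain ⟨e, rfl⟩ := hΔeven.two_dvd
  rw [← mul_add, pow_mul] at h1 h2
  rw [pow_mul] at h3
  norm_num at h1 h2 h3
  have hω := CheckGroup.add_omega_add_omega_omega (g := g) (e := e)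
  have h4 := CheckGroup.four_nsmul_eq_zero (g := g) (e := e)
  have hN := six_mul_card_signedOrbits_add_card_two_torsion hω h4
  have hT := three_mul_card_signedOrbits_two_torsion_add_one hω h4
  have hD := three_mul_card_signedOrbits_doubles_add_one hω h4
  rw [CheckGroup.card_eq, CheckGroup.card_two_torsion] at hN
  rw [CheckGroup.card_two_torsion] at hT
  rw [CheckGroup.card_image_two_nsmul] at hD
  obtain ⟨k, rfl⟩ : ∃ k, n'' = k * 3 := ⟨n'' / 3, by omega⟩
  obtain ⟨h, t, w, ht, hcover⟩ := exists_signedOrbit_cover hω h4 (m := m) (n' := n') (k := k)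
    (by omega) (by omega) (by omega)
  exact ⟨_, isPerfectCode_ker_of_signedOrbit_cover hω h4 (by rw [CheckGroup.card_eq]; omega) ht
    hcover⟩

theorem exists_additive_perfect_code_even_Delta (Γ Δ m n' n'' : ℕ)
    (hΓ : Even Γ) (hΔeven : Even Δ) (hΔ : 2 ≤ Δ) (hm : 1 ≤ m)
    (h1 : 3 * (2 * m + n' + n'') + 1 = 2 ^ (Γ + 2 * Δ))
    (h2 : 3 * n' + n'' + 1 = 2 ^ (Γ + Δ))
    (h3 : n'' + 1 ≤ 2 ^ Δ) :
    ∃ C : AddSubgroup (DoobVtx m n' n''),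
      IsPerfectCode (DoobGraphZ m n' n'') (C : Set (DoobVtx m n' n'')) :=
  exists_additive_perfect_code_even_Delta_general Γ Δ m n' n'' hΓ hΔeven h1 h2 h3
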